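/- arXiv:1903.08736 — 11 statements merged into one kernel-verified Lean document; each statement's English description precedes it below -/
import Mathlib

section
/- Let Q be a d×d real Markov generator and M = exp(Q). If the entries satisfy M i j > 0 and M j k > 0 for indices i, j, k, then M i k > 0. -/
/-!
For large enough `c` the matrix `A = Q + c • 1` is entrywise nonnegative, and
`exp Q = e^(-c) • exp A`, so `exp Q` and `exp A` have the same positive entries. Since
`exp A = ∑ Aᵏ / k!` has nonnegative terms, `(exp A) i j > 0` iff `(Aᵏ) i j > 0` for some `k`,
and this relation is transitive because `(Aᵖ⁺ᵠ) i k ≥ (Aᵖ) i j * (Aᵠ) j k`.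
-/

/-- A Markov generator (rate matrix): nonnegative off-diagonal entries,
each row sums to 0. -/
def IsGenerator {d : ℕ} (Q : Matrix (Fin d) (Fin d) ℝ) : Prop :=
  (∀ i j, i ≠ j → 0 ≤ Q i j) ∧ ∀ i, ∑ j, Q i j = 0

open NormedSpace Nat

theorem HasSum.pos_iff_exists_pos {ι α : Type*} [AddCommMonoid α] [PartialOrder α]
    [IsOrderedAddMonoid α] [TopologicalSpace α] [OrderClosedTopology α]
    {f : ι → α} {a : α} (hf : HasSum f a) (hf₀ : ∀ i, 0 ≤ f i) :
    0 < a ↔ ∃ i, 0 < f i := by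
  refine ⟨fun ha => ?_, fun ⟨i, hi⟩ => hi.trans_le (le_hasSum hf i fun j _ => hf₀ j)⟩
  by_contra! hf_nonpos
  obtain rfl : f = 0 := funext fun i => ((hf₀ i).lt_or_eq.resolve_left (hf_nonpos i)).symm
  exact ha.ne' (hf.unique hasSum_zero)

namespace Matrix

theorem apply_mul_apply_le_mul_apply {l m o R : Type*} [Fintype m] [Semiring R] [PartialOrder R]
    [IsOrderedRing R] {A : Matrix l m R} {B : Matrix m o R} (hA : ∀ i j, 0 ≤ A i j)
    (hB : ∀ i j, 0 ≤ B i j) (i : l) (j : m) (k : o) : A i j * B j k ≤ (A * B) i k :=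
  Finset.single_le_sum (fun p _ => mul_nonneg (hA i p) (hB p k)) (Finset.mem_univ j)

variable {n : Type*} [Fintype n] [DecidableEq n]

theorem hasSum_exp_apply {𝕂 : Type*} [RCLike 𝕂] (A : Matrix n n 𝕂) (i j : n) :
    HasSum (fun k : ℕ => (k !⁻¹ : 𝕂) * (A ^ k) i j) (exp A i j) := by
  have hsum : Summable fun k : ℕ => (k !⁻¹ : 𝕂) • A ^ k :=
    open scoped Norms.Operator in expSeries_summable' A
  rw [exp_eq_tsum 𝕂]
  exact Pi.hasSum.1 (Pi.hasSum.1 hsum.hasSum i) j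

theorem exp_apply_pos_iff_exists_pow_apply_pos {A : Matrix n n ℝ} (hA : ∀ i j, 0 ≤ A i j)
    (i j : n) : 0 < exp A i j ↔ ∃ k, 0 < (A ^ k) i j := by
  rw [(hasSum_exp_apply A i j).pos_iff_exists_pos
    fun k => mul_nonneg (by positivity) (pow_apply_nonneg hA k i j)]
  exact exists_congr fun k => mul_pos_iff_of_pos_left (by positivity)

theorem exp_apply_pos_trans_of_nonneg {A : Matrix n n ℝ} (hA : ∀ i j, 0 ≤ A i j) {i j k : n}
    (hij : 0 < exp A i j) (hjk : 0 < exp A j k) : 0 < exp A i k := by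
  obtain ⟨p, hp⟩ := (exp_apply_pos_iff_exists_pow_apply_pos hA i j).1 hij
  obtain ⟨q, hq⟩ := (exp_apply_pos_iff_exists_pow_apply_pos hA j k).1 hjk
  refine (exp_apply_pos_iff_exists_pow_apply_pos hA i k).2 ⟨p + q, ?_⟩
  rw [pow_add]
  exact (mul_pos hp hq).trans_le
    (apply_mul_apply_le_mul_apply (pow_apply_nonneg hA p) (pow_apply_nonneg hA q) i j k)

theorem exp_add_smul_one (A : Matrix n n ℝ) (c : ℝ) :
    exp (A + c • (1 : Matrix n n ℝ)) = Real.exp c • exp A := by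
  rw [exp_add_of_commute _ _ ((Commute.one_right A).smul_right c), smul_one_eq_diagonal,
    exp_diagonal, Pi.exp_def, ← Real.exp_eq_exp_ℝ, ← smul_one_eq_diagonal, mul_smul_one]

theorem exists_nonneg_add_smul_one {Q : Matrix n n ℝ} (hQ : ∀ i j, i ≠ j → 0 ≤ Q i j) :
    ∃ c : ℝ, ∀ i j, 0 ≤ (Q + c • (1 : Matrix n n ℝ)) i j := by
  refine ⟨∑ p, |Q p p|, fun i j => ?_⟩
  rcases eq_or_ne i j with rfl | hij
  · have : |Q i i| ≤ ∑ p, |Q p p| :=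
      Finset.single_le_sum (fun p _ => abs_nonneg (Q p p)) (Finset.mem_univ i)
    simp only [add_apply, smul_apply, one_apply_eq, smul_eq_mul, mul_one]
    linarith [neg_abs_le (Q i i)]
  · simpa [one_apply_ne hij] using hQ i j hij

theorem exp_apply_pos_trans_of_offDiag_nonneg {Q : Matrix n n ℝ}
    (hQ : ∀ i j, i ≠ j → 0 ≤ Q i j) {i j k : n}
    (hij : 0 < exp Q i j) (hjk : 0 < exp Q j k) : 0 < exp Q i k := by
  obtain ⟨c, hc⟩ := exists_nonneg_add_smul_one hQ
  have hpos_iff (p q : n) : 0 < exp Q p q ↔ 0 < exp (Q + c • (1 : Matrix n n ℝ)) p q := by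
    rw [exp_add_smul_one, smul_apply, smul_eq_mul, mul_pos_iff_of_pos_left (Real.exp_pos c)]
  rw [hpos_iff] at hij hjk ⊢
  exact exp_apply_pos_trans_of_nonneg hc hij hjk

end Matrix

theorem exp_generator_pos_trans (d : ℕ) (Q : Matrix (Fin d) (Fin d) ℝ)
    (hQ : IsGenerator Q) (M : Matrix (Fin d) (Fin d) ℝ)
    (hM : M = NormedSpace.exp Q) (i j k : Fin d)
    (hij : 0 < M i j) (hjk : 0 < M j k) :
    0 < M i k := by
  subst hM
  exact Matrix.exp_apply_pos_trans_of_offDiag_nonneg hQ.1 hij hjk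
end

section
/- Let Q be a d×d real Markov generator. If u is a row vector (i.e., u ∈ ℝ^d acting by left multiplication) with u · Q² = 0, then u · Q = 0. Equivalently, the kernel of the transpose of Q² equals the kernel of the transpose of Q, so the algebraic and geometric multiplicities of the eigenvalue 0 of Q coincide. -/
theorem generator_vecMul_sq_eq_zero (d : ℕ) (Q : Matrix (Fin d) (Fin d) ℝ)
    (hQ : IsGenerator Q) (u : Fin d → ℝ)
    (hu : Matrix.vecMul u (Q * Q) = 0) :
    Matrix.vecMul u Q = 0 := by
  obtain ⟨hpos, hsum⟩ := hQ
  set v := Matrix.vecMul u Q with hv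
  have hvQ : Matrix.vecMul v Q = 0 := by
    rw [hv, Matrix.vecMul_vecMul, hu]
  set M := ∑ i, ∑ j, |Q i j| with hM
  have hM0 : 0 ≤ M :=
    Finset.sum_nonneg fun i _ => Finset.sum_nonneg fun j _ => abs_nonneg _
  set ε := 1 / (M + 1) with hε
  have hε0 : 0 < ε := by positivity
  have hεM : ε * (M + 1) = 1 := by
    rw [hε]
    field_simp
  have hsmulQ : ∀ w : Fin d → ℝ, Matrix.vecMul w (ε • Q) = ε • Matrix.vecMul w Q := by
    intro w
    ext j
    simp only [Matrix.vecMul, dotProduct, Matrix.smul_apply, Pi.smul_apply,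
      smul_eq_mul, Finset.mul_sum]
    exact Finset.sum_congr rfl fun i _ => by ring
  set P := (1 : Matrix (Fin d) (Fin d) ℝ) + ε • Q with hP
  have hPapp : ∀ i j, P i j = (1 : Matrix (Fin d) (Fin d) ℝ) i j + ε * Q i j := by
    intro i j; simp [hP]
  have hPnn : ∀ i j, 0 ≤ P i j := by
    intro i j
    by_cases h : i = j
    · subst h
      have h1 : |Q i i| ≤ M := by
        calc |Q i i| ≤ ∑ j, |Q i j| :=
              Finset.single_le_sum (f := fun j => |Q i j|)
                (fun j _ => abs_nonneg _) (Finset.mem_univ i)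
          _ ≤ M := Finset.single_le_sum (f := fun i => ∑ j, |Q i j|)
                (fun i _ => Finset.sum_nonneg fun j _ => abs_nonneg _) (Finset.mem_univ i)
      rw [hPapp, Matrix.one_apply_eq]
      have h2 : -M ≤ Q i i := neg_le_of_abs_le h1
      nlinarith
    · rw [hPapp, Matrix.one_apply_ne h]
      have := hpos i j h
      nlinarith
  have hProw : ∀ i, ∑ j, P i j = 1 := by
    intro i
    simp only [hPapp]
    rw [Finset.sum_add_distrib, ← Finset.mul_sum, hsum i]
    simp [Matrix.one_apply]
  have hnn : ∀ n : ℕ, ∀ i j, 0 ≤ (P ^ n) i j := by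
    intro n
    induction n with
    | zero => intro i j; simp [Matrix.one_apply]; positivity
    | succ n ih =>
      intro i j
      rw [pow_succ, Matrix.mul_apply]
      exact Finset.sum_nonneg fun k _ => mul_nonneg (ih i k) (hPnn k j)
  have hrow : ∀ n : ℕ, ∀ i, ∑ j, (P ^ n) i j = 1 := by
    intro n
    induction n with
    | zero => intro i; simp [Matrix.one_apply]
    | succ n ih =>
      intro i
      simp only [pow_succ, Matrix.mul_apply]
      rw [Finset.sum_comm]
      calc ∑ k, ∑ j, (P ^ n) i k * P k j
          = ∑ k, (P ^ n) i k * ∑ j, P k j := by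
            simp [Finset.mul_sum]
        _ = 1 := by simp only [hProw]; simpa using ih i
  have hle1 : ∀ n : ℕ, ∀ i j, (P ^ n) i j ≤ 1 := by
    intro n i j
    calc (P ^ n) i j ≤ ∑ j', (P ^ n) i j' :=
          Finset.single_le_sum (f := fun j' => (P ^ n) i j')
            (fun j' _ => hnn n i j') (Finset.mem_univ j)
      _ = 1 := hrow n i
  have hvP : Matrix.vecMul v P = v := by
    rw [hP, Matrix.vecMul_add, Matrix.vecMul_one, hsmulQ, hvQ]
    simp
  have huP : Matrix.vecMul u P = u + ε • v := by
    rw [hP, Matrix.vecMul_add, Matrix.vecMul_one, hsmulQ, hv]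
  have hrec : ∀ n : ℕ, Matrix.vecMul u (P ^ n) = u + ((n : ℝ) * ε) • v := by
    intro n
    induction n with
    | zero => simp
    | succ n ih =>
      rw [pow_succ, ← Matrix.vecMul_vecMul, ih, Matrix.add_vecMul, huP,
        Matrix.smul_vecMul, hvP]
      push_cast
      ext j
      simp
      ring
  set C := ∑ i, |u i| with hC
  have hbound : ∀ n : ℕ, ∀ j, |Matrix.vecMul u (P ^ n) j| ≤ C := by
    intro n j
    have : Matrix.vecMul u (P ^ n) j = ∑ i, u i * (P ^ n) i j := by
      simp [Matrix.vecMul, dotProduct]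
    rw [this]
    calc |∑ i, u i * (P ^ n) i j| ≤ ∑ i, |u i * (P ^ n) i j| :=
          Finset.abs_sum_le_sum_abs _ _
      _ ≤ ∑ i, |u i| := by
          apply Finset.sum_le_sum
          intro i _
          rw [abs_mul]
          have h1 : |(P ^ n) i j| = (P ^ n) i j := abs_of_nonneg (hnn n i j)
          nlinarith [abs_nonneg (u i), hle1 n i j, hnn n i j]
      _ = C := rfl
  ext j
  simp only [Pi.zero_apply]
  by_contra hvj
  have habs : 0 < |v j| := abs_pos.mpr hvj
  obtain ⟨n, hn⟩ := exists_nat_gt ((C + |u j|) / (ε * |v j|))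
  have hn' : (C + |u j|) < n * (ε * |v j|) := by
    rw [div_lt_iff₀ (by positivity)] at hn
    linarith
  have hb := hbound n j
  rw [hrec n] at hb
  have hval : (u + ((n : ℝ) * ε) • v) j = u j + (n : ℝ) * ε * v j := by simp
  rw [hval] at hb
  have h3 : (n : ℝ) * ε * |v j| = |(n : ℝ) * ε * v j| := by
    rw [abs_mul, abs_of_nonneg (by positivity : (0:ℝ) ≤ (n:ℝ) * ε)]
  have h4 : |(n : ℝ) * ε * v j| ≤ |u j + (n : ℝ) * ε * v j| + |u j| := by
    have := abs_sub_abs_le_abs_sub ((n : ℝ) * ε * v j) (-(u j))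
    have h5 : (n : ℝ) * ε * v j - -(u j) = u j + (n : ℝ) * ε * v j := by ring
    rw [h5, abs_neg] at this
    linarith
  have h6 : (n : ℝ) * (ε * |v j|) = (n : ℝ) * ε * |v j| := by ring
  linarith [hn', hb, h4, h3 ▸ (h6 ▸ hn')]
end

section
/- Let M be a d×d real Markov matrix such that every complex eigenvalue λ of M with |λ| = 1 satisfies λ = 1. Then the limit M∞ = lim_{n→∞} Mⁿ exists, M∞ is a Markov matrix, and the matrix R = M∞ − 1 (where 1 is the identity) is a Markov generator satisfying R² = −R. -/
/-- A Markov matrix: nonnegative entries, each row sums to 1. -/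
def IsMarkov {d : ℕ} (M : Matrix (Fin d) (Fin d) ℝ) : Prop :=
  (∀ i j, 0 ≤ M i j) ∧ ∀ i, ∑ j, M i j = 1

/-!
Powers of a row-stochastic matrix `A` have ∞-operator norm at most `1`. Such power-boundedness
forces the eigenvalue `1` to be semisimple (`Aⁿ v = v + n (A - 1) v` when `(A - 1)² v = 0`), so
`ℂⁿ = ker (A - 1) ⊕ range (A - 1)`. The projection `P` onto the first summand along the second
satisfies `AP = PA = P = P²`, hence `(A - P)ᵏ⁺¹ = Aᵏ⁺¹ - P`, and every nonzero eigenvalue of `A - P`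
is an eigenvalue of `A` other than `1`, so lies in the open unit disc. Gelfand's formula then gives
`(A - P)ᵏ → 0`, i.e. `Aᵏ → P`. The limit is Markov because stochastic matrices form a closed set,
and it is idempotent as a limit of powers, which is `R² = -R` for `R = P - 1`.
-/

open Filter Topology Matrix

theorem IsIdempotentElem.sub_pow_succ {R : Type*} [Ring R] {a p : R} (hp : IsIdempotentElem p)
    (hap : a * p = p) (hpa : p * a = p) (n : ℕ) : (a - p) ^ (n + 1) = a ^ (n + 1) - p := by
  have hpow : ∀ k : ℕ, a ^ k * p = p := fun k => by
    induction k with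
    | zero => simp
    | succ k ih => rw [pow_succ, mul_assoc, hap, ih]
  induction n with
  | zero => simp
  | succ n ih => rw [pow_succ, ih, sub_mul, mul_sub, mul_sub, ← pow_succ, hpow, hpa, hp.eq]; abel

theorem IsIdempotentElem.of_tendsto_pow {M : Type*} [Monoid M] [TopologicalSpace M]
    [ContinuousMul M] [T2Space M] {a p : M} (h : Tendsto (a ^ ·) atTop (𝓝 p)) :
    IsIdempotentElem p := by
  have h2 : Tendsto (fun n => a ^ n * a ^ n) atTop (𝓝 p) := by
    simpa only [Function.comp_def, pow_add] using
      h.comp (tendsto_atTop_mono (fun n => Nat.le_add_right n n) tendsto_id)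
  exact tendsto_nhds_unique (h.mul h) h2

section NormedAlgebra

variable {A : Type*} [NormedRing A]

theorem spectrum.norm_le_one_of_forall_norm_pow_le {𝕜 : Type*} [NormedField 𝕜] [IsAlgClosed 𝕜]
    [NormedAlgebra 𝕜 A] [CompleteSpace A] {a : A} {C : ℝ} (ha : ∀ k : ℕ, ‖a ^ k‖ ≤ C) {z : 𝕜}
    (hz : z ∈ spectrum 𝕜 a) : ‖z‖ ≤ 1 := by
  by_contra! h
  obtain ⟨k, hk⟩ := pow_unbounded_of_one_lt (C * ‖(1 : A)‖) h
  have hzk := spectrum.subset_closedBall_norm_mul (a ^ k) (spectrum.pow_mem_pow a k hz)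
  rw [Metric.mem_closedBall, dist_zero_right, norm_pow] at hzk
  exact hk.not_ge (hzk.trans (mul_le_mul_of_nonneg_right (ha k) (norm_nonneg _)))

variable [NormedAlgebra ℂ A] [CompleteSpace A]

theorem tendsto_pow_atTop_nhds_zero_of_forall_norm_lt_one {a : A}
    (ha : ∀ z ∈ spectrum ℂ a, ‖z‖ < 1) : Tendsto (a ^ ·) atTop (𝓝 0) := by
  nontriviality A
  obtain ⟨r, hρr, hr1⟩ := ENNReal.lt_iff_exists_nnreal_btwn.mp
    (spectrum.spectralRadius_lt_of_forall_lt a (r := 1) fun z hz => by exact_mod_cast ha z hz)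
  have hlt : ∀ᶠ n : ℕ in atTop, ‖a ^ n‖₊ < r ^ n := by
    filter_upwards [(spectrum.pow_nnnorm_pow_one_div_tendsto_nhds_spectralRadius
      a).eventually_lt_const hρr, eventually_gt_atTop 0] with n hn hn0
    rw [one_div, ENNReal.rpow_inv_lt_iff (by positivity), ENNReal.rpow_natCast] at hn
    exact_mod_cast hn
  refine squeeze_zero_norm' (hlt.mono fun n hn => hn.le) ?_
  exact_mod_cast tendsto_pow_atTop_nhds_zero_of_lt_one r.2 (by exact_mod_cast hr1)

theorem tendsto_pow_atTop_nhds_of_isIdempotentElem {a p : A} (hp : IsIdempotentElem p)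
    (hap : a * p = p) (hpa : p * a = p) (h : ∀ z ∈ spectrum ℂ (a - p), ‖z‖ < 1) :
    Tendsto (a ^ ·) atTop (𝓝 p) := by
  rw [← tendsto_add_atTop_iff_nat 1]
  have := ((tendsto_pow_atTop_nhds_zero_of_forall_norm_lt_one h).comp
    (tendsto_add_atTop_nat 1)).add_const p
  simpa [Function.comp_def, hp.sub_pow_succ hap hpa] using this

end NormedAlgebra

namespace Module.End

open LinearMap

section Field

variable {K V : Type*} [Field K] [AddCommGroup V] [Module K V] [FiniteDimensional K V]

theorem isCompl_ker_range_of_apply_apply_eq_zero {g : End K V}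
    (hg : ∀ v, g (g v) = 0 → g v = 0) : IsCompl (ker g) (range g) := by
  refine (Submodule.isCompl_iff_disjoint _ _ ?_).mpr (Submodule.disjoint_def.mpr ?_)
  · rw [add_comm]
    exact (finrank_range_add_finrank_ker g).ge
  rintro _ hk ⟨v, rfl⟩
  exact hg v hk

theorem exists_spectralProjection_one (f : End K V)
    (hf : ∀ v, (f - 1) ((f - 1) v) = 0 → (f - 1) v = 0) :
    ∃ p : End K V, IsIdempotentElem p ∧ f * p = p ∧ p * f = p ∧
      ∀ z ∈ spectrum K (f - p), z ≠ 0 → z ∈ spectrum K f ∧ z ≠ 1 := by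
  have hcompl := isCompl_ker_range_of_apply_apply_eq_zero hf
  set p := (LinearMap.ker (f - 1)).projection (range (f - 1)) hcompl
  have hp : IsIdempotentElem p := Submodule.isIdempotentElem_projection hcompl
  have hfix : ∀ v, f v = v → p v = v := fun v hv =>
    Submodule.projection_apply_of_mem_left hcompl (by simp [hv])
  have hfp : f * p = p := by
    ext v
    have : (f - 1) (p v) = 0 := Submodule.projection_apply_mem hcompl v
    simpa [sub_eq_zero] using this
  have hpf : p * f = p := by
    ext v
    have : p ((f - 1) v) = 0 :=
      (Submodule.projection_apply_eq_zero_iff hcompl).mpr (mem_range_self _ v)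
    simpa [sub_eq_zero] using this
  refine ⟨p, hp, hfp, hpf, fun z hz hz0 => ?_⟩
  obtain ⟨v, hv, hv0⟩ := (hasEigenvalue_iff_mem_spectrum.mpr hz).exists_hasEigenvector
  rw [mem_eigenspace_iff] at hv
  have hpv : p v = 0 := by
    have : p ((f - p) v) = 0 := by
      rw [← mul_apply, mul_sub, hpf, hp.eq, sub_self, LinearMap.zero_apply]
    rwa [hv, map_smul, smul_eq_zero, or_iff_right hz0] at this
  have hfv : f v = z • v := by simpa [hpv] using hv
  refine ⟨hasEigenvalue_iff_mem_spectrum.mp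
    (hasEigenvalue_of_hasEigenvector ⟨mem_eigenspace_iff.mpr hfv, hv0⟩), ?_⟩
  rintro rfl
  exact hv0 (hpv ▸ (hfix v (by simpa using hfv)).symm)

end Field

theorem sub_one_apply_eq_zero_of_norm_pow_apply_le {𝕜 E : Type*} [RCLike 𝕜]
    [NormedAddCommGroup E] [NormedSpace 𝕜 E] {f : End 𝕜 E} {C : ℝ}
    (hf : ∀ (k : ℕ) v, ‖(f ^ k) v‖ ≤ C * ‖v‖) {v : E}
    (hv : (f - 1) ((f - 1) v) = 0) : (f - 1) v = 0 := by
  set w := (f - 1) v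
  have hfv : f v = v + w := by simp [w]
  have hfw : f w = w := by simpa [sub_eq_zero] using hv
  have hpow : ∀ k : ℕ, (f ^ k) v = v + k • w := fun k => by
    induction k with
    | zero => simp
    | succ k ih =>
      rw [pow_succ', mul_apply, ih, map_add, map_nsmul, hfw, hfv, succ_nsmul]
      abel
  have hbound : ∀ k : ℕ, k * ‖w‖ ≤ (C + 1) * ‖v‖ := fun k => by
    have hfk := hf k v
    have hsub := norm_sub_le ((f ^ k) v) v
    rw [hpow] at hfk hsub
    rw [add_sub_cancel_left, RCLike.norm_nsmul 𝕜, nsmul_eq_mul] at hsub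
    linarith
  by_contra hw
  obtain ⟨k, hk⟩ := exists_nat_gt ((C + 1) * ‖v‖ / ‖w‖)
  rw [div_lt_iff₀ (norm_pos_iff.mpr hw)] at hk
  exact (hbound k).not_gt hk

end Module.End

namespace Matrix

section LinftyOpNorm

attribute [local instance] Matrix.linftyOpNormedAddCommGroup Matrix.linftyOpNormedRing
  Matrix.linftyOpNormedAlgebra

variable {n : Type*} [Fintype n] [DecidableEq n]

theorem exists_tendsto_pow_of_norm_pow_le {A : Matrix n n ℂ} {C : ℝ}
    (hA : ∀ k : ℕ, ‖A ^ k‖ ≤ C) (h1 : ∀ z ∈ spectrum ℂ A, ‖z‖ = 1 → z = 1) :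
    ∃ P, Tendsto (A ^ ·) atTop (𝓝 P) := by
  set e : Matrix n n ℂ ≃ₐ[ℂ] Module.End ℂ (n → ℂ) := toLinAlgEquiv'
  have hbdd : ∀ (k : ℕ) v, ‖(e A ^ k) v‖ ≤ C * ‖v‖ := fun k v => by
    rw [← map_pow, toLinAlgEquiv'_apply]
    exact (linfty_opNorm_mulVec _ _).trans (mul_le_mul_of_nonneg_right (hA k) (norm_nonneg v))
  obtain ⟨p, hp, hAp, hpA, hσ⟩ := (e A).exists_spectralProjection_one fun v =>
    Module.End.sub_one_apply_eq_zero_of_norm_pow_apply_le hbdd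
  refine ⟨e.symm p, tendsto_pow_atTop_nhds_of_isIdempotentElem (hp.map e.symm) ?_ ?_
    fun z hz => ?_⟩
  · simpa using congrArg e.symm hAp
  · simpa using congrArg e.symm hpA
  rcases eq_or_ne z 0 with rfl | hz0
  · simp
  obtain ⟨hzA, hz1⟩ := hσ z (by simpa [← AlgEquiv.spectrum_eq e] using hz) hz0
  rw [AlgEquiv.spectrum_eq] at hzA
  exact (spectrum.norm_le_one_of_forall_norm_pow_le hA hzA).lt_of_ne (mt (h1 z hzA) hz1)

theorem norm_map_ofReal_le_one_of_mem_rowStochastic {N : Matrix n n ℝ}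
    (hN : N ∈ rowStochastic ℝ n) : ‖N.map Complex.ofReal‖ ≤ 1 := by
  rw [linfty_opNorm_def, NNReal.coe_le_one]
  refine Finset.sup_le fun i _ => ?_
  rw [← NNReal.coe_le_one, NNReal.coe_sum]
  simp only [map_apply, coe_nnnorm, Complex.norm_real, Real.norm_of_nonneg
    (nonneg_of_mem_rowStochastic hN), sum_row_of_mem_rowStochastic hN, le_refl]

theorem exists_tendsto_pow_of_mem_rowStochastic {N : Matrix n n ℝ}
    (hN : N ∈ rowStochastic ℝ n)
    (h1 : ∀ z ∈ spectrum ℂ (N.map Complex.ofReal), ‖z‖ = 1 → z = 1) :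
    ∃ P, Tendsto (N ^ ·) atTop (𝓝 P) := by
  have hpow : ∀ k : ℕ, N.map Complex.ofReal ^ k = (N ^ k).map Complex.ofReal :=
    fun k => (Complex.ofRealHom.mapMatrix.map_pow N k).symm
  obtain ⟨P, hP⟩ := exists_tendsto_pow_of_norm_pow_le (fun k => by
    rw [hpow]; exact norm_map_ofReal_le_one_of_mem_rowStochastic (pow_mem hN k)) h1
  refine ⟨P.map Complex.re, ?_⟩
  simpa [Function.comp_def, hpow, map_map] using
    (continuous_id.matrix_map Complex.continuous_re).tendsto P |>.comp hP

end LinftyOpNorm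

theorem isClosed_rowStochastic {R n : Type*} [Fintype n] [DecidableEq n] [Semiring R]
    [PartialOrder R] [IsOrderedRing R] [TopologicalSpace R] [OrderClosedTopology R]
    [IsTopologicalSemiring R] : IsClosed (rowStochastic R n : Set (Matrix n n R)) := by
  simp only [rowStochastic, Submonoid.coe_set_mk, Subsemigroup.coe_set_mk, Set.ofPred_and,
    Set.ofPred_forall]
  exact (isClosed_iInter fun i => isClosed_iInter fun j =>
      isClosed_le continuous_const (continuous_id.matrix_elem i j)).inter
    (isClosed_eq (continuous_id.matrix_mulVec continuous_const) continuous_const)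

end Matrix

theorem isMarkov_iff_mem_rowStochastic {d : ℕ} {M : Matrix (Fin d) (Fin d) ℝ} :
    IsMarkov M ↔ M ∈ rowStochastic ℝ (Fin d) :=
  mem_rowStochastic_iff_sum.symm

theorem IsMarkov.isGenerator_sub_one {d : ℕ} {M : Matrix (Fin d) (Fin d) ℝ} (hM : IsMarkov M) :
    IsGenerator (M - 1) := by
  refine ⟨fun i j hij => by simpa [Matrix.one_apply_ne hij] using hM.1 i j, fun i => ?_⟩
  simp [Matrix.sub_apply, Finset.sum_sub_distrib, hM.2 i, Matrix.one_apply]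

theorem markov_power_limit (d : ℕ) (M : Matrix (Fin d) (Fin d) ℝ)
    (hM : IsMarkov M)
    (hspec : ∀ lam ∈ spectrum ℂ (M.map (Complex.ofReal)),
      ‖lam‖ = 1 → lam = 1) :
    ∃ Minf : Matrix (Fin d) (Fin d) ℝ,
      Filter.Tendsto (fun n : ℕ => M ^ n) Filter.atTop (nhds Minf) ∧
      IsMarkov Minf ∧ IsGenerator (Minf - 1) ∧
      (Minf - 1) * (Minf - 1) = -(Minf - 1) := by
  rw [isMarkov_iff_mem_rowStochastic] at hM
  obtain ⟨Minf, hlim⟩ := Matrix.exists_tendsto_pow_of_mem_rowStochastic hM hspec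
  have hMarkov : IsMarkov Minf := isMarkov_iff_mem_rowStochastic.mpr <|
    Matrix.isClosed_rowStochastic.mem_of_tendsto hlim (Eventually.of_forall (pow_mem hM))
  refine ⟨Minf, hlim, hMarkov, hMarkov.isGenerator_sub_one, ?_⟩
  rw [← neg_sub, neg_mul_neg, (IsIdempotentElem.of_tendsto_pow hlim).one_sub.eq, neg_neg]
end

section
/- Let A, B, C be d×d complex matrices with d ≥ 2. Then the following are equivalent: (1) C = A + B and A·B = B·A; (2) exp(t·A)·exp(t·B) = exp(t·C) for all real t; (3) there exists ε > 0 such that exp(t·A)·exp(t·B) = exp(t·C) for all t with 0 ≤ t < ε. -/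
/-!
Differentiating `exp (t • A) * exp (t • B) = exp (t • C)` at `t = 0` gives `A + B = C`, and
differentiating twice gives `A * (A + B) + (A + B) * B = C * C`, i.e. `A * B = B * A`. Equality on
`[0, ε)` is enough, since right-hand derivatives determine derivatives of differentiable functions.
-/

open NormedSpace Set Filter Topology

section OneSidedDerivative

variable {E : Type*} [NormedAddCommGroup E] [NormedSpace ℝ E]

theorem HasDerivAt.eq_of_eventuallyEq_nhdsGE {f g : ℝ → E} {f' g' : E} {t : ℝ}
    (hf : HasDerivAt f f' t) (hg : HasDerivAt g g' t) (h : f =ᶠ[𝓝[≥] t] g) : f' = g' :=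
  (uniqueDiffOn_Ici t t self_mem_Ici).eq_deriv _
    (hf.hasDerivWithinAt.congr_of_eventuallyEq h.symm (h.eq_of_nhdsWithin self_mem_Ici).symm)
    hg.hasDerivWithinAt

theorem Set.EqOn.hasDerivAt_eqOn_Ico {f g f' g' : ℝ → E} {a b : ℝ}
    (hf : ∀ t, HasDerivAt f (f' t) t) (hg : ∀ t, HasDerivAt g (g' t) t)
    (h : EqOn f g (Ico a b)) : EqOn f' g' (Ico a b) := fun t ht =>
  (hf t).eq_of_eventuallyEq_nhdsGE (hg t) <|
    mem_of_superset (Ico_mem_nhdsGE ht.2) fun _ hs => h ⟨ht.1.trans hs.1, hs.2⟩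

end OneSidedDerivative

section ExpSmul

variable {𝔸 : Type*} [NormedRing 𝔸] [NormedAlgebra ℝ 𝔸] [CompleteSpace 𝔸]

theorem Commute.exp_smul_mul_exp_smul {A B : 𝔸} (h : Commute A B) (t : ℝ) :
    NormedSpace.exp (t • A) * NormedSpace.exp (t • B) = NormedSpace.exp (t • (A + B)) := by
  let : NormedAlgebra ℚ 𝔸 := NormedAlgebra.restrictScalars ℚ ℝ 𝔸
  rw [smul_add, exp_add_of_commute ((h.smul_left t).smul_right t)]

theorem hasDerivAt_exp_smul_mul_mul_exp_smul (A M B : 𝔸) (t : ℝ) :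
    HasDerivAt (fun u : ℝ => exp (u • A) * M * exp (u • B))
      (exp (t • A) * (A * M + M * B) * exp (t • B)) t := by
  refine (((hasDerivAt_exp_smul_const A t).mul_const M).mul
    (hasDerivAt_exp_smul_const' B t)).congr_deriv ?_
  noncomm_ring

theorem eq_add_and_commute_of_exp_smul_mul_exp_smul_eqOn_Ico {A B C : 𝔸} {ε : ℝ} (hε : 0 < ε)
    (h : EqOn (fun t : ℝ => exp (t • A) * exp (t • B)) (fun t => exp (t • C)) (Ico 0 ε)) :
    C = A + B ∧ Commute A B := by
  replace h : EqOn (fun t : ℝ => exp (t • A) * 1 * exp (t • B)) (fun t => exp (t • C)) (Ico 0 ε) :=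
    by simpa only [mul_one] using h
  have h₁ := h.hasDerivAt_eqOn_Ico (hasDerivAt_exp_smul_mul_mul_exp_smul A 1 B)
    (hasDerivAt_exp_smul_const' C)
  have h₂ := h₁.hasDerivAt_eqOn_Ico (hasDerivAt_exp_smul_mul_mul_exp_smul A (A * 1 + 1 * B) B)
    fun t => (hasDerivAt_exp_smul_const' C t).const_mul C
  have h₀ : (0 : ℝ) ∈ Ico 0 ε := ⟨le_rfl, hε⟩
  have hC : A + B = C := by simpa using h₁ h₀
  have hC2 : A * (A + B) + (A + B) * B = C * C := by simpa using h₂ h₀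
  subst hC
  refine ⟨rfl, ?_⟩
  have : A * (A + B) + (A + B) * B - (A + B) * (A + B) = A * B - B * A := by noncomm_ring
  rw [hC2, sub_self] at this
  exact sub_eq_zero.mp this.symm

theorem exp_smul_mul_exp_smul_eqOn_Ico_iff {A B C : 𝔸} {ε : ℝ} (hε : 0 < ε) :
    EqOn (fun t : ℝ => exp (t • A) * exp (t • B)) (fun t => exp (t • C)) (Ico 0 ε) ↔
      C = A + B ∧ Commute A B :=
  ⟨eq_add_and_commute_of_exp_smul_mul_exp_smul_eqOn_Ico hε, by
    rintro ⟨rfl, h⟩ t -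
    exact h.exp_smul_mul_exp_smul t⟩

theorem exp_smul_mul_exp_smul_eq_iff {A B C : 𝔸} :
    (∀ t : ℝ, exp (t • A) * exp (t • B) = exp (t • C)) ↔ C = A + B ∧ Commute A B :=
  ⟨fun h => (exp_smul_mul_exp_smul_eqOn_Ico_iff one_pos).1 fun t _ => h t, by
    rintro ⟨rfl, h⟩ t
    exact h.exp_smul_mul_exp_smul t⟩

end ExpSmul

theorem exp_mul_exp_eq_exp_iff_general (d : ℕ)
    (A B C : Matrix (Fin d) (Fin d) ℂ) :
    ((C = A + B ∧ A * B = B * A) ↔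
      (∀ t : ℝ, NormedSpace.exp (t • A) * NormedSpace.exp (t • B) =
        NormedSpace.exp (t • C))) ∧
    ((C = A + B ∧ A * B = B * A) ↔
      (∃ ε : ℝ, 0 < ε ∧ ∀ t : ℝ, 0 ≤ t → t < ε →
        NormedSpace.exp (t • A) * NormedSpace.exp (t • B) =
          NormedSpace.exp (t • C))) := by
  open scoped Matrix.Norms.Operator in
  refine ⟨exp_smul_mul_exp_smul_eq_iff.symm, ⟨fun h => ?_, fun ⟨ε, hε, h⟩ => ?_⟩⟩
  · exact ⟨1, one_pos, fun t _ _ => exp_smul_mul_exp_smul_eq_iff.2 h t⟩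
  · exact (exp_smul_mul_exp_smul_eqOn_Ico_iff hε).1 fun t ht => h t ht.1 ht.2

theorem exp_mul_exp_eq_exp_iff (d : ℕ) (hd : 2 ≤ d)
    (A B C : Matrix (Fin d) (Fin d) ℂ) :
    ((C = A + B ∧ A * B = B * A) ↔
      (∀ t : ℝ, NormedSpace.exp (t • A) * NormedSpace.exp (t • B) =
        NormedSpace.exp (t • C))) ∧
    ((C = A + B ∧ A * B = B * A) ↔
      (∃ ε : ℝ, 0 < ε ∧ ∀ t : ℝ, 0 ≤ t → t < ε →
        NormedSpace.exp (t • A) * NormedSpace.exp (t • B) =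
          NormedSpace.exp (t • C))) :=
  exp_mul_exp_eq_exp_iff_general d A B C
end

section
/- Let a, b ∈ [0,1] and let M be the 2×2 Markov matrix with rows (1−a, a) and (b, 1−b). Then the following are equivalent: (1) M is embeddable, i.e., M = exp(Q) for some 2×2 Markov generator Q; (2) 0 < det(M) = 1 − a − b ≤ 1; (3) a + b < 1. -/
open NormedSpace Matrix

theorem Matrix.det_exp_pos {n : Type*} [Fintype n] [DecidableEq n] (A : Matrix n n ℝ) :
    0 < (exp A).det := by
  have hhalf : exp A = exp ((2⁻¹ : ℝ) • A) * exp ((2⁻¹ : ℝ) • A) := by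
    rw [← Matrix.exp_add_of_commute _ _ (Commute.refl _), ← add_smul]
    norm_num
  have hdet : IsUnit (exp ((2⁻¹ : ℝ) • A)).det :=
    (Matrix.isUnit_iff_isUnit_det _).mp (Matrix.isUnit_exp _)
  rw [hhalf, det_mul]
  exact mul_self_pos.mpr hdet.ne_zero

theorem IsIdempotentElem.inv_smul_of_mul_self_eq_smul {K A : Type*} [Field K] [Ring A]
    [Algebra K A] {c : K} {x : A} (hx : x * x = c • x) : IsIdempotentElem (c⁻¹ • x) := by
  rw [IsIdempotentElem, smul_mul_smul_comm, hx, smul_smul]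
  simpa using congrArg (· • x) (mul_self_mul_inv c⁻¹)

theorem NormedSpace.exp_smul_of_isIdempotentElem {𝔸 : Type*} [NormedRing 𝔸] [NormedAlgebra ℝ 𝔸]
    [CompleteSpace 𝔸] {P : 𝔸} (hP : IsIdempotentElem P) (t : ℝ) :
    exp (t • P) = 1 + (Real.exp t - 1) • P := by
  have hpow (n : ℕ) : (t • P) ^ n = t ^ n • P + (0 : ℝ) ^ n • (1 - P) := by
    rcases n with _ | n
    · simp
    · simp [smul_pow, hP.pow_succ_eq]
  have hexp_t : HasSum (fun n : ℕ => ((n.factorial)⁻¹ : ℝ) * t ^ n) (Real.exp t) := by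
    simpa [Real.exp_eq_exp_ℝ, smul_eq_mul] using exp_series_hasSum_exp' (𝕂 := ℝ) t
  have hexp_0 : HasSum (fun n : ℕ => ((n.factorial)⁻¹ : ℝ) * (0 : ℝ) ^ n) 1 := by
    simpa [smul_eq_mul] using exp_series_hasSum_exp' (𝕂 := ℝ) (0 : ℝ)
  have hsum := (hexp_t.smul_const P).add (hexp_0.smul_const (1 - P))
  refine (exp_series_hasSum_exp' (𝕂 := ℝ) (t • P)).unique ?_
  convert hsum using 1
  · funext n
    rw [hpow, smul_add, smul_smul, smul_smul, mul_smul, mul_smul]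
  · rw [sub_smul, one_smul, one_smul]
    abel

theorem IsGenerator.smul {d : ℕ} {Q : Matrix (Fin d) (Fin d) ℝ} (hQ : IsGenerator Q) {c : ℝ}
    (hc : 0 ≤ c) : IsGenerator (c • Q) :=
  ⟨fun i j hij => mul_nonneg hc (hQ.1 i j hij), fun i => by
    simp only [Matrix.smul_apply, smul_eq_mul, ← Finset.mul_sum, hQ.2 i, mul_zero]⟩

theorem isGenerator_fin_two {a b : ℝ} (ha : 0 ≤ a) (hb : 0 ≤ b) :
    IsGenerator !![-a, a; b, -b] := by
  refine ⟨fun i j hij => ?_, fun i => ?_⟩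
  · fin_cases i <;> fin_cases j <;> simp_all
  · fin_cases i <;> simp [Fin.sum_univ_two]

theorem fin_two_generator_mul_self (a b : ℝ) :
    !![-a, a; b, -b] * !![-a, a; b, -b] = -(a + b) • !![-a, a; b, -b] := by
  ext i j
  fin_cases i <;> fin_cases j <;> simp [Matrix.mul_apply] <;> ring

theorem add_lt_one_of_exp_eq {a b : ℝ} {Q : Matrix (Fin 2) (Fin 2) ℝ}
    (hQ : exp Q = !![1 - a, a; b, 1 - b]) : a + b < 1 := by
  have := Matrix.det_exp_pos Q
  rw [hQ, det_fin_two_of] at this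
  nlinarith

theorem exists_isGenerator_exp_eq_of_add_lt_one {a b : ℝ} (ha : 0 ≤ a) (hb : 0 ≤ b)
    (hab : a + b < 1) :
    ∃ Q : Matrix (Fin 2) (Fin 2) ℝ, IsGenerator Q ∧ exp Q = !![1 - a, a; b, 1 - b] := by
  set G : Matrix (Fin 2) (Fin 2) ℝ := !![-a, a; b, -b] with hG
  have hP : IsIdempotentElem ((-(a + b))⁻¹ • G) :=
    .inv_smul_of_mul_self_eq_smul (fin_two_generator_mul_self a b)
  set t := Real.log (1 - (a + b))
  have ht : t ≤ 0 := Real.log_nonpos (by linarith) (by linarith)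
  refine ⟨t • (-(a + b))⁻¹ • G, ?_, ?_⟩
  · rw [smul_smul]
    exact (isGenerator_fin_two ha hb).smul
      (mul_nonneg_of_nonpos_of_nonpos ht (inv_nonpos.mpr (by linarith)))
  · let _ := Matrix.linftyOpNormedRing (n := Fin 2) (α := ℝ)
    let _ := Matrix.linftyOpNormedAlgebra (n := Fin 2) (α := ℝ) (R := ℝ)
    refine (exp_smul_of_isIdempotentElem hP t).trans ?_
    rw [Real.exp_log (by linarith), sub_sub_cancel_left, smul_smul]
    rcases (add_nonneg ha hb).eq_or_lt with h0 | hpos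
    · obtain ⟨rfl, rfl⟩ : a = 0 ∧ b = 0 := ⟨by linarith, by linarith⟩
      simp [hG, Matrix.one_fin_two]
    · rw [mul_inv_cancel₀ (by linarith), one_smul, hG]
      ext i j
      fin_cases i <;> fin_cases j <;> simp <;> ring

theorem kendall_embedding_two_dim (a b : ℝ)
    (ha : a ∈ Set.Icc (0 : ℝ) 1) (hb : b ∈ Set.Icc (0 : ℝ) 1)
    (M : Matrix (Fin 2) (Fin 2) ℝ) (hM : M = !![1 - a, a; b, 1 - b]) :
    ((∃ Q : Matrix (Fin 2) (Fin 2) ℝ, IsGenerator Q ∧ NormedSpace.exp Q = M) ↔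
      (0 < M.det ∧ M.det = 1 - a - b ∧ M.det ≤ 1)) ∧
    ((∃ Q : Matrix (Fin 2) (Fin 2) ℝ, IsGenerator Q ∧ NormedSpace.exp Q = M) ↔
      a + b < 1) := by
  have hdet : M.det = 1 - a - b := by
    rw [hM, det_fin_two_of]
    ring
  have hembed : (∃ Q, IsGenerator Q ∧ exp Q = M) ↔ a + b < 1 := by
    subst hM
    exact ⟨fun ⟨_, _, hQ⟩ => add_lt_one_of_exp_eq hQ,
      exists_isGenerator_exp_eq_of_add_lt_one ha.1 hb.1⟩
  rw [hembed, hdet]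
  exact ⟨⟨fun h => ⟨by linarith, rfl, by linarith [ha.1, hb.1]⟩, fun h => by linarith [h.1]⟩,
    Iff.rfl⟩
end

section
/- Let a, b ∈ [0,1] with a + b < 1 and let M be the 2×2 Markov matrix with rows (1−a, a) and (b, 1−b). If Q and Q' are 2×2 Markov generators with exp(Q) = exp(Q') = M, then Q = Q'. Moreover, when 0 < a + b < 1, this unique generator is Q = (−log(1 − a − b)/(a + b)) · (M − 1), and when a = b = 0 it is Q = 0. -/
/-!
Rows summing to zero force a `2 × 2` matrix `R` to satisfy `R * R = -s • R`, where `s` is the sum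
of its off-diagonal entries, so its exponential series collapses to `exp R = 1 + φ(-s) • R` with
`φ(c) = (exp c - 1) / c`. Adding the off-diagonal entries of `M - 1 = φ(-s) • R` gives
`a + b = s φ(-s) = 1 - exp (-s)`, which pins down `s`; as `φ` never vanishes,
`R = φ(-s)⁻¹ • (M - 1)` is then determined by `M`.
-/

open NormedSpace
open scoped Nat

/-- The power series of `(Real.exp c - 1) / c`, equal to `1` at `c = 0`. -/
noncomputable def expSlope (c : ℝ) : ℝ := ∑' n : ℕ, c ^ n / (n + 1)!

theorem summable_expSlope (c : ℝ) : Summable fun n : ℕ => c ^ n / (n + 1)! := by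
  refine (Real.summable_pow_div_factorial |c|).of_norm_bounded fun n => ?_
  rw [norm_div, norm_pow, Real.norm_eq_abs, Real.norm_natCast]
  gcongr
  exact n.le_succ

theorem exp_eq_one_add_expSlope_smul {𝔸 : Type*} [Ring 𝔸] [Algebra ℝ 𝔸] [TopologicalSpace 𝔸]
    [IsTopologicalRing 𝔸] [ContinuousSMul ℝ 𝔸] [T2Space 𝔸] {x : 𝔸} {c : ℝ}
    (h : x * x = c • x) : exp x = 1 + expSlope c • x := by
  have hpow (n : ℕ) : x ^ (n + 1) = c ^ n • x := by
    induction n with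
    | zero => simp
    | succ n ih => rw [pow_succ, ih, smul_mul_assoc, h, smul_smul, pow_succ]
  have htail : HasSum (fun n : ℕ => ((n + 1)! : ℝ)⁻¹ • x ^ (n + 1)) (expSlope c • x) := by
    refine ((summable_expSlope c).hasSum.smul_const x).congr_fun fun n => ?_
    rw [hpow, smul_smul, div_eq_inv_mul]
  have hseries : HasSum (fun n : ℕ => (n ! : ℝ)⁻¹ • x ^ n) (1 + expSlope c • x) := by
    simpa using (hasSum_nat_add_iff' 1).mp (by simpa using htail)
  rw [exp_eq_tsum ℝ]
  exact hseries.tsum_eq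

theorem Real.exp_eq_one_add_expSlope_mul (c : ℝ) : Real.exp c = 1 + expSlope c * c := by
  simpa [Real.exp_eq_exp_ℝ] using exp_eq_one_add_expSlope_smul (smul_eq_mul c c).symm

theorem expSlope_zero : expSlope 0 = 1 := by
  rw [expSlope, tsum_eq_single 0 fun n hn => by simp [zero_pow hn]]
  simp

theorem expSlope_ne_zero (c : ℝ) : expSlope c ≠ 0 := by
  intro h
  have hc : c = 0 := by simpa [h] using Real.exp_eq_one_add_expSlope_mul c
  simp [hc, expSlope_zero] at h

theorem inv_expSlope_log_one_sub {u : ℝ} (hu : 0 < u) (hu₁ : u < 1) :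
    (expSlope (Real.log (1 - u)))⁻¹ = -Real.log (1 - u) / u := by
  have hexp := Real.exp_eq_one_add_expSlope_mul (Real.log (1 - u))
  rw [Real.exp_log (by linarith)] at hexp
  rw [eq_div_iff hu.ne', inv_mul_eq_iff_eq_mul₀ (expSlope_ne_zero _)]
  linarith

namespace Matrix

theorem mul_self_eq_smul_of_sum_row_eq_zero {R : Matrix (Fin 2) (Fin 2) ℝ}
    (hR : ∀ i, ∑ j, R i j = 0) : R * R = (-(R 0 1 + R 1 0)) • R := by
  have h₀ := hR 0
  have h₁ := hR 1
  simp only [Fin.sum_univ_two] at h₀ h₁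
  ext i j
  fin_cases i <;> fin_cases j <;>
    simp only [Fin.zero_eta, Fin.mk_one, Fin.isValue, mul_apply, Fin.sum_univ_two, smul_apply,
      smul_eq_mul] <;> grind

theorem eq_inv_expSlope_smul_of_exp_eq {R : Matrix (Fin 2) (Fin 2) ℝ}
    (hR : ∀ i, ∑ j, R i j = 0) {a b : ℝ} (he : exp R = !![1 - a, a; b, 1 - b]) :
    R = (expSlope (Real.log (1 - a - b)))⁻¹ • (!![1 - a, a; b, 1 - b] - 1) := by
  set s := R 0 1 + R 1 0 with hs
  have hM : !![1 - a, a; b, 1 - b] - 1 = expSlope (-s) • R := by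
    rw [← he, exp_eq_one_add_expSlope_smul (mul_self_eq_smul_of_sum_row_eq_zero hR),
      add_sub_cancel_left]
  have ha : a = expSlope (-s) * R 0 1 := by simpa using congr_fun (congr_fun hM 0) 1
  have hb : b = expSlope (-s) * R 1 0 := by simpa using congr_fun (congr_fun hM 1) 0
  have hlog : Real.log (1 - a - b) = -s := by
    rw [← Real.log_exp (-s), Real.exp_eq_one_add_expSlope_mul, ha, hb, hs]
    ring_nf
  rw [hlog, hM, inv_smul_smul₀ (expSlope_ne_zero _)]

end Matrix

theorem unique_generator_two_dim_general (a b : ℝ)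
    (hab : a + b < 1)
    (M : Matrix (Fin 2) (Fin 2) ℝ) (hM : M = !![1 - a, a; b, 1 - b])
    (Q Q' : Matrix (Fin 2) (Fin 2) ℝ)
    (hQ : IsGenerator Q) (hQ' : IsGenerator Q')
    (he : NormedSpace.exp Q = M) (he' : NormedSpace.exp Q' = M) :
    Q = Q' ∧
    (0 < a + b → Q = (-(Real.log (1 - a - b)) / (a + b)) • (M - 1)) ∧
    (a = 0 ∧ b = 0 → Q = 0) := by
  subst hM
  have hQ_eq := Matrix.eq_inv_expSlope_smul_of_exp_eq hQ.2 he
  refine ⟨hQ_eq.trans (Matrix.eq_inv_expSlope_smul_of_exp_eq hQ'.2 he').symm, fun hpos => ?_, ?_⟩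
  · rw [hQ_eq, sub_sub, inv_expSlope_log_one_sub hpos hab]
  · rintro ⟨rfl, rfl⟩
    simpa [← Matrix.one_fin_two] using hQ_eq

theorem unique_generator_two_dim (a b : ℝ)
    (ha : a ∈ Set.Icc (0 : ℝ) 1) (hb : b ∈ Set.Icc (0 : ℝ) 1)
    (hab : a + b < 1)
    (M : Matrix (Fin 2) (Fin 2) ℝ) (hM : M = !![1 - a, a; b, 1 - b])
    (Q Q' : Matrix (Fin 2) (Fin 2) ℝ)
    (hQ : IsGenerator Q) (hQ' : IsGenerator Q')
    (he : NormedSpace.exp Q = M) (he' : NormedSpace.exp Q' = M) :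
    Q = Q' ∧
    (0 < a + b → Q = (-(Real.log (1 - a - b)) / (a + b)) • (M - 1)) ∧
    (a = 0 ∧ b = 0 → Q = 0) :=
  unique_generator_two_dim_general a b hab M hM Q Q' hQ hQ' he he'
end

section
/- Let d ≥ 2, let c₁, …, c_d ≥ 0 with c = c₁ + ⋯ + c_d, let C be the d×d matrix all of whose rows equal (c₁, …, c_d), and assume M_C = (1−c)·1 + C is a Markov matrix (i.e., c ≤ 1 + cᵢ for all i). Then there exists an equal-input Markov generator Q (i.e., Q = C' − c'·1 for some matrix C' with equal nonnegative rows summing to c') with exp(Q) = M_C if and only if 0 ≤ c < 1. -/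
/-!
An equal-input generator `Q = C' - a • 1` with row `c'` and rate `a = ∑ c'` satisfies
`Q * Q = -a • Q`, so its exponential series collapses to `exp Q = 1 + exprel (-a) • Q`: the
equal-input Markov matrix with row `exprel (-a) • c'`, whose summatory parameter is
`1 - exp (-a) < 1`. For `d ≥ 2` an equal-input matrix determines its row through its
off-diagonal entries, so `M_C` is embeddable exactly when `c = 1 - exp (-a)` for some `a ≥ 0`,
i.e. when `0 ≤ c < 1`.
-/

open Matrix NormedSpace Nat

/-- `(exp x - 1) / x`, extended continuously by `1` at `x = 0` (the name follows the GSL). -/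
noncomputable def exprel (x : ℝ) : ℝ := ∑' n : ℕ, x ^ n / (n + 1)!

theorem hasSum_exprel (x : ℝ) : HasSum (fun n : ℕ => x ^ n / (n + 1)!) (exprel x) := by
  refine (Summable.of_norm_bounded (Real.summable_pow_div_factorial |x|) fun n => ?_).hasSum
  rw [norm_div, norm_pow, Real.norm_eq_abs, Real.norm_natCast]
  gcongr
  omega

theorem exprel_zero : exprel 0 = 1 := by
  simpa using (hasSum_exprel 0).unique (hasSum_single 0 fun n hn => by simp [hn])

theorem mul_exprel (x : ℝ) : x * exprel x = Real.exp x - 1 := by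
  have hexp : HasSum (fun n : ℕ => x ^ n / n !) (Real.exp x) := by
    simpa [← Real.exp_eq_exp_ℝ] using expSeries_div_hasSum_exp (𝔸 := ℝ) x
  have hshift := (hasSum_nat_add_iff' 1).mpr hexp
  simp only [Finset.range_one, Finset.sum_singleton, pow_zero, factorial_zero, cast_one,
    div_one] at hshift
  refine ((hasSum_exprel x).mul_left x).unique (hshift.congr_fun fun n => ?_)
  ring

theorem exprel_pos (x : ℝ) : 0 < exprel x := by
  rcases lt_trichotomy x 0 with hx | rfl | hx
  · refine pos_of_mul_neg_right ?_ hx.le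
    rw [mul_exprel, sub_neg]
    exact Real.exp_lt_one_iff.mpr hx
  · exact exprel_zero ▸ one_pos
  · refine pos_of_mul_pos_right ?_ hx.le
    rw [mul_exprel, sub_pos]
    exact Real.one_lt_exp_iff.mpr hx

theorem pow_succ_eq_smul_of_mul_self_eq_smul {R 𝔸 : Type*} [CommSemiring R] [Semiring 𝔸]
    [Algebra R 𝔸] {P : 𝔸} {a : R} (hP : P * P = a • P) (n : ℕ) :
    P ^ (n + 1) = a ^ n • P := by
  induction n with
  | zero => simp
  | succ n ih => rw [pow_succ, ih, smul_mul_assoc, hP, smul_smul, pow_succ]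

theorem exp_eq_one_add_exprel_smul {𝔸 : Type*} [Ring 𝔸] [Algebra ℝ 𝔸] [TopologicalSpace 𝔸]
    [IsTopologicalRing 𝔸] [ContinuousSMul ℝ 𝔸] [T2Space 𝔸] {P : 𝔸} {a : ℝ}
    (hP : P * P = a • P) : exp P = 1 + exprel a • P := by
  have hshift : HasSum (fun n : ℕ => ((n + 1)! : ℝ)⁻¹ • P ^ (n + 1)) (exprel a • P) := by
    refine ((hasSum_exprel a).smul_const P).congr_fun fun n => ?_
    rw [pow_succ_eq_smul_of_mul_self_eq_smul hP, smul_smul, div_eq_inv_mul]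
  have hexp : HasSum (fun n : ℕ => (n ! : ℝ)⁻¹ • P ^ n) (1 + exprel a • P) :=
    (hasSum_nat_add_iff' 1).mp (by simpa using hshift)
  rw [exp_eq_tsum ℝ]
  exact hexp.tsum_eq

section EqualInput

variable {ι : Type*} [Fintype ι]

theorem of_const_row_mul_self (c : ι → ℝ) :
    (of fun _ j => c j) * (of fun _ j => c j) =
      (∑ j, c j) • (of fun _ j => c j : Matrix ι ι ℝ) := by
  ext i j
  simp [mul_apply, ← Finset.sum_mul]

theorem sum_exprel_neg_sum_smul (c : ι → ℝ) :
    ∑ j, (exprel (-∑ j, c j) • c) j = 1 - Real.exp (-∑ j, c j) := by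
  simp only [Pi.smul_apply, smul_eq_mul, ← Finset.mul_sum]
  linarith [mul_exprel (-∑ j, c j)]

variable [DecidableEq ι]

def equalInputMatrix (c : ι → ℝ) : Matrix ι ι ℝ := (1 - ∑ j, c j) • 1 + of fun _ j => c j

def equalInputGenerator (c : ι → ℝ) : Matrix ι ι ℝ := (of fun _ j => c j) - (∑ j, c j) • 1

theorem equalInputGenerator_mul_self (c : ι → ℝ) :
    equalInputGenerator c * equalInputGenerator c = (-∑ j, c j) • equalInputGenerator c := by
  simp only [equalInputGenerator, sub_mul, mul_sub, smul_mul_assoc, mul_smul_comm, one_mul,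
    mul_one, of_const_row_mul_self]
  module

theorem exp_equalInputGenerator (c : ι → ℝ) :
    exp (equalInputGenerator c) = equalInputMatrix (exprel (-∑ j, c j) • c) := by
  rw [exp_eq_one_add_exprel_smul (equalInputGenerator_mul_self c)]
  ext i j
  simp [equalInputMatrix, equalInputGenerator, one_apply, ← Finset.mul_sum]
  split_ifs <;> ring

theorem equalInputMatrix_injective [Nontrivial ι] :
    Function.Injective (equalInputMatrix : (ι → ℝ) → Matrix ι ι ℝ) := by
  intro c c' h
  funext j
  obtain ⟨i, hij⟩ := exists_ne j
  simpa [equalInputMatrix, one_apply_ne hij] using congr_fun₂ h i j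

theorem sum_lt_one_of_exp_equalInputGenerator_eq [Nontrivial ι] {c c' : ι → ℝ}
    (h : exp (equalInputGenerator c') = equalInputMatrix c) : ∑ j, c j < 1 := by
  rw [exp_equalInputGenerator, equalInputMatrix_injective.eq_iff] at h
  rw [← h, sum_exprel_neg_sum_smul]
  exact sub_lt_self _ (Real.exp_pos _)

/-- The rate `a = -log (1 - ∑ c)` is forced by `1 - ∑ c = exp (-a)`, and the row of the
generator is `c` rescaled by `1 / exprel (-a)`. -/
theorem exists_exp_equalInputGenerator_eq {c : ι → ℝ} (hc : ∀ i, 0 ≤ c i)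
    (hc₁ : ∑ j, c j < 1) :
    ∃ c' : ι → ℝ, (∀ i, 0 ≤ c' i) ∧ exp (equalInputGenerator c') = equalInputMatrix c := by
  set a := -Real.log (1 - ∑ j, c j)
  have hexp : Real.exp (-a) = 1 - ∑ j, c j := by
    rw [neg_neg, Real.exp_log (by linarith)]
  have hk := exprel_pos (-a)
  have hsum : ∑ j, ((exprel (-a))⁻¹ • c) j = a := by
    simp only [Pi.smul_apply, smul_eq_mul, ← Finset.mul_sum]
    rw [inv_mul_eq_iff_eq_mul₀ hk.ne']
    linarith [mul_exprel (-a)]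
  refine ⟨(exprel (-a))⁻¹ • c, fun i => smul_nonneg (inv_nonneg.mpr hk.le) (hc i), ?_⟩
  rw [exp_equalInputGenerator, hsum, smul_inv_smul₀ hk.ne']

end EqualInput

theorem equal_input_embeddable_iff_general (d : ℕ) (hd : 2 ≤ d)
    (c : Fin d → ℝ) (hc : ∀ i, 0 ≤ c i)
    (M : Matrix (Fin d) (Fin d) ℝ)
    (hM : M = (1 - ∑ j, c j) • (1 : Matrix (Fin d) (Fin d) ℝ) +
      Matrix.of fun _ j => c j) :
    (∃ c' : Fin d → ℝ, (∀ i, 0 ≤ c' i) ∧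
        NormedSpace.exp ((Matrix.of fun _ j => c' j) -
          (∑ j, c' j) • (1 : Matrix (Fin d) (Fin d) ℝ)) = M) ↔
    (0 ≤ ∑ j, c j ∧ ∑ j, c j < 1) := by
  have : Nontrivial (Fin d) := Fin.nontrivial_iff_two_le.mpr hd
  subst hM
  change (∃ c', (∀ i, 0 ≤ c' i) ∧ exp (equalInputGenerator c') = equalInputMatrix c) ↔ _
  constructor
  · rintro ⟨c', -, h⟩
    exact ⟨Finset.sum_nonneg fun i _ => hc i, sum_lt_one_of_exp_equalInputGenerator_eq h⟩
  · exact fun ⟨_, hc₁⟩ => exists_exp_equalInputGenerator_eq hc hc₁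

theorem equal_input_embeddable_iff (d : ℕ) (hd : 2 ≤ d)
    (c : Fin d → ℝ) (hc : ∀ i, 0 ≤ c i)
    (hMarkov : ∀ i, (∑ j, c j) ≤ 1 + c i)
    (M : Matrix (Fin d) (Fin d) ℝ)
    (hM : M = (1 - ∑ j, c j) • (1 : Matrix (Fin d) (Fin d) ℝ) +
      Matrix.of fun _ j => c j) :
    (∃ c' : Fin d → ℝ, (∀ i, 0 ≤ c' i) ∧
        NormedSpace.exp ((Matrix.of fun _ j => c' j) -
          (∑ j, c' j) • (1 : Matrix (Fin d) (Fin d) ℝ)) = M) ↔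
    (0 ≤ ∑ j, c j ∧ ∑ j, c j < 1) :=
  equal_input_embeddable_iff_general d hd c hc M hM
end

section
/- Let d ≥ 2 be EVEN, let c₁, …, c_d ≥ 0 with c = c₁ + ⋯ + c_d, let C be the d×d matrix all of whose rows equal (c₁, …, c_d), and assume M_C = (1−c)·1 + C is a Markov matrix. Then M_C is embeddable (i.e., M_C = exp(Q) for SOME d×d Markov generator Q, not necessarily of equal-input type) if and only if 0 ≤ c < 1. -/
/-!
Every real matrix exponential `exp Q = (exp (Q / 2))²` has positive determinant, whereas
`det M_C = (1 - c) ^ (d - 1)` with `d - 1` odd; hence embeddability forces `c < 1`.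
Conversely, for `0 < c < 1` the matrix `Π` whose rows all equal `(c₁ / c, …, c_d / c)` is
idempotent and `M_C = 1 - c (1 - Π)`, so `Q = log (1 - c) • (1 - Π)` is a generator with
`exp Q = 1 + (e^{log (1 - c)} - 1) (1 - Π) = M_C`.
-/

open NormedSpace Matrix

theorem IsIdempotentElem.exp_smul {𝔸 : Type*} [Ring 𝔸] [Algebra ℝ 𝔸] [TopologicalSpace 𝔸]
    [IsTopologicalRing 𝔸] [ContinuousSMul ℝ 𝔸] [T2Space 𝔸] {P : 𝔸}
    (hP : IsIdempotentElem P) (r : ℝ) : exp (r • P) = 1 + (Real.exp r - 1) • P := by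
  rw [exp_eq_tsum ℝ]
  refine HasSum.tsum_eq ?_
  -- `P ^ n = P` for `n ≥ 1`: the series is that of `e ^ r • P`, corrected by `1 - P` at `n = 0`.
  have hseries := ((Real.exp_eq_exp_ℝ ▸ expSeries_div_hasSum_exp r).smul_const P).add
    (hasSum_ite_eq 0 (1 - P))
  convert hseries using 1
  · ext (_ | n)
    · simp
    · rw [smul_pow, hP.pow_succ_eq, smul_smul, if_neg n.succ_ne_zero, add_zero, div_eq_inv_mul]
  · rw [sub_smul, one_smul]
    abel

namespace Matrix

variable {n R : Type*} [Fintype n]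

theorem det_exp_pos_s13 [DecidableEq n] (A : Matrix n n ℝ) : 0 < (exp A).det := by
  have hsq : exp A = exp ((2⁻¹ : ℝ) • A) ^ 2 := by
    rw [← exp_nsmul, ← Nat.cast_smul_eq_nsmul ℝ, smul_smul, Nat.cast_two,
      mul_inv_cancel₀ two_ne_zero, one_smul]
  rw [hsq, det_pow]
  exact sq_pos_of_ne_zero ((isUnit_iff_isUnit_det _).mp (isUnit_exp ((2⁻¹ : ℝ) • A))).ne_zero

theorem det_smul_one_add_vecMulVec [DecidableEq n] [CommRing R] [Nonempty n] (a : R)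
    (u v : n → R) :
    (a • 1 + vecMulVec u v).det = a ^ (Fintype.card n - 1) * (a + u ⬝ᵥ v) := by
  have hcharpoly := eval_charpoly (vecMulVec (-u) v) a
  rw [charpoly_vecMulVec, scalar_apply, ← smul_one_eq_diagonal, neg_vecMulVec, sub_neg_eq_add]
    at hcharpoly
  rw [← hcharpoly, Polynomial.eval_sub, Polynomial.eval_smul, neg_dotProduct]
  simp only [Polynomial.eval_pow, Polynomial.eval_X, smul_eq_mul, neg_mul, sub_neg_eq_add]
  obtain ⟨k, hk⟩ := Nat.exists_eq_add_one_of_ne_zero (Fintype.card_ne_zero (α := n))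
  rw [hk, Nat.add_sub_cancel]
  ring

theorem isIdempotentElem_of_const_rows [CommSemiring R] (π : n → R) (hπ : ∑ j, π j = 1) :
    IsIdempotentElem (of fun _ j => π j : Matrix n n R) := by
  ext i j
  simp [mul_apply, ← Finset.sum_mul, hπ]

end Matrix

theorem isGenerator_smul_one_sub_of_const_rows {d : ℕ} (π : Fin d → ℝ)
    (hπ₀ : ∀ j, 0 ≤ π j) (hπ : ∑ j, π j = 1) {r : ℝ} (hr : r ≤ 0) :
    IsGenerator (r • (1 - of fun _ j => π j)) := by
  refine ⟨fun i j hij => ?_, fun i => ?_⟩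
  · simpa [one_apply_ne hij] using mul_nonpos_of_nonpos_of_nonneg hr (hπ₀ j)
  · simp [← Finset.mul_sum, Finset.sum_sub_distrib, hπ, one_apply]

section EqualInput

variable {n R : Type*} [Fintype n] [DecidableEq n]

def equalInput [CommRing R] (c : n → R) : Matrix n n R :=
  (1 - ∑ j, c j) • 1 + of fun _ j => c j

theorem det_equalInput [CommRing R] [Nonempty n] (c : n → R) :
    (equalInput c).det = (1 - ∑ j, c j) ^ (Fintype.card n - 1) := by
  have hrows : (of fun _ j => c j : Matrix n n R) = vecMulVec 1 c := by
    ext i j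
    simp [vecMulVec_apply]
  rw [equalInput, hrows, det_smul_one_add_vecMulVec, one_dotProduct, sub_add_cancel, mul_one]

theorem sum_lt_one_of_exp_eq_equalInput [Nonempty n] (heven : Even (Fintype.card n))
    {c : n → ℝ} {A : Matrix n n ℝ} (hA : exp A = equalInput c) : ∑ j, c j < 1 := by
  have hodd : Odd (Fintype.card n - 1) := Nat.Even.sub_odd Fintype.card_pos heven odd_one
  have hdet := det_exp_pos_s13 A
  rw [hA, det_equalInput, hodd.pow_pos_iff] at hdet
  linarith

theorem equalInput_eq_one_sub_smul {c : n → ℝ} (hs : ∑ j, c j ≠ 0) :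
    equalInput c = 1 - (∑ j, c j) • (1 - of fun _ j => c j / ∑ j, c j) := by
  have hrows :
      (∑ j, c j) • (of fun _ j => c j / ∑ j, c j : Matrix n n ℝ) = of fun _ j => c j := by
    ext i j
    simp [mul_div_cancel₀ _ hs]
  rw [equalInput, smul_sub, hrows]
  module

theorem exists_isGenerator_exp_eq_equalInput {d : ℕ} {c : Fin d → ℝ} (hc : ∀ j, 0 ≤ c j)
    (hs : ∑ j, c j < 1) : ∃ Q, IsGenerator Q ∧ exp Q = equalInput c := by
  rcases (Finset.sum_nonneg fun j _ => hc j).eq_or_lt with hzero | hpos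
  · have hc0 : c = 0 := funext fun j =>
      (Finset.sum_eq_zero_iff_of_nonneg fun j _ => hc j).mp hzero.symm j (Finset.mem_univ j)
    refine ⟨0, ⟨fun _ _ _ => le_rfl, fun _ => by simp⟩, ?_⟩
    ext i j
    simp [hc0, equalInput, one_apply]
  set s := ∑ j, c j
  set π := fun j => c j / s
  have hπ : ∑ j, π j = 1 := by rw [← Finset.sum_div, div_self hpos.ne']
  refine ⟨Real.log (1 - s) • (1 - of fun _ j => π j),
    isGenerator_smul_one_sub_of_const_rows π (fun j => div_nonneg (hc j) hpos.le) hπ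
      (Real.log_nonpos (by linarith) (by linarith)), ?_⟩
  rw [(isIdempotentElem_of_const_rows π hπ).one_sub.exp_smul, Real.exp_log (by linarith),
    equalInput_eq_one_sub_smul hpos.ne']
  module

end EqualInput

theorem equal_input_embeddable_iff_even_general (d : ℕ) (hd : 2 ≤ d) (heven : Even d)
    (c : Fin d → ℝ) (hc : ∀ i, 0 ≤ c i)
    (M : Matrix (Fin d) (Fin d) ℝ)
    (hM : M = (1 - ∑ j, c j) • (1 : Matrix (Fin d) (Fin d) ℝ) +
      Matrix.of fun _ j => c j) :
    (∃ Q : Matrix (Fin d) (Fin d) ℝ, IsGenerator Q ∧ NormedSpace.exp Q = M) ↔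
    (0 ≤ ∑ j, c j ∧ ∑ j, c j < 1) := by
  have : Nonempty (Fin d) := ⟨⟨0, by omega⟩⟩
  rw [show M = equalInput c from hM]
  refine ⟨fun ⟨Q, _, hQ⟩ => ⟨Finset.sum_nonneg fun j _ => hc j, ?_⟩,
    fun ⟨_, hs⟩ => exists_isGenerator_exp_eq_equalInput hc hs⟩
  exact sum_lt_one_of_exp_eq_equalInput (by rwa [Fintype.card_fin]) hQ

theorem equal_input_embeddable_iff_even (d : ℕ) (hd : 2 ≤ d) (heven : Even d)
    (c : Fin d → ℝ) (hc : ∀ i, 0 ≤ c i)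
    (hMarkov : ∀ i, (∑ j, c j) ≤ 1 + c i)
    (M : Matrix (Fin d) (Fin d) ℝ)
    (hM : M = (1 - ∑ j, c j) • (1 : Matrix (Fin d) (Fin d) ℝ) +
      Matrix.of fun _ j => c j) :
    (∃ Q : Matrix (Fin d) (Fin d) ℝ, IsGenerator Q ∧ NormedSpace.exp Q = M) ↔
    (0 ≤ ∑ j, c j ∧ ∑ j, c j < 1) :=
  equal_input_embeddable_iff_even_general d hd heven c hc M hM
end

section
/- Let Q be a d×d real Markov generator (d ≥ 2) satisfying Q² = −c·Q with c > 0. Then 0 is a simple eigenvalue of Q (algebraic multiplicity 1, equivalently rank Q = d − 1) if and only if Q is an equal-input generator with summatory parameter c, i.e., Q = C − c·1 where C is a matrix with all rows equal to (c₁,…,c_d), all cᵢ ≥ 0, and c₁ + ⋯ + c_d = c. -/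
open Matrix

namespace Matrix

variable {m n p K : Type*} [Fintype n] [Field K]

theorem rank_eq_card_sub_one_iff_ker_eq_span {A : Matrix m n K} {v : n → K} (hv : v ≠ 0)
    (hAv : A *ᵥ v = 0) :
    A.rank = Fintype.card n - 1 ↔ LinearMap.ker A.mulVecLin = K ∙ v := by
  have hspan_le : K ∙ v ≤ LinearMap.ker A.mulVecLin :=
    (Submodule.span_singleton_le_iff_mem _ _).2 hAv
  have hrank : A.rank + Module.finrank K (LinearMap.ker A.mulVecLin) = Fintype.card n := by
    rw [rank]
    simpa using LinearMap.finrank_range_add_finrank_ker A.mulVecLin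
  have hker_pos : 1 ≤ Module.finrank K (LinearMap.ker A.mulVecLin) := by
    simpa [finrank_span_singleton hv] using Submodule.finrank_mono hspan_le
  constructor
  · intro h
    refine (Submodule.eq_of_le_of_finrank_eq hspan_le ?_).symm
    rw [finrank_span_singleton hv]
    omega
  · intro h
    rw [h, finrank_span_singleton hv] at hrank
    omega

theorem exists_eq_replicateRow_of_mul_eq_zero {A : Matrix m n K} {B : Matrix n p K}
    (hker : LinearMap.ker A.mulVecLin = K ∙ 1) (hAB : A * B = 0) :
    ∃ r : p → K, B = replicateRow n r := by
  have hcol : ∀ j, ∃ a : K, a • (1 : n → K) = B.col j := fun j => by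
    rw [← Submodule.mem_span_singleton, ← hker, LinearMap.mem_ker, mulVecLin_apply]
    exact funext fun i => congrFun (congrFun hAB i) j
  choose r hr using hcol
  exact ⟨r, ext fun i j => by simpa using (congrFun (hr j) i).symm⟩

theorem ker_mulVecLin_replicateRow_sub_smul_one_le_span_one [DecidableEq n] (r : n → K)
    {c : K} (hc : c ≠ 0) :
    LinearMap.ker (replicateRow n r - c • (1 : Matrix n n K)).mulVecLin ≤ K ∙ 1 := by
  intro x hx
  rw [LinearMap.mem_ker, mulVecLin_apply, sub_mulVec, smul_mulVec, one_mulVec,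
    sub_eq_zero] at hx
  refine Submodule.mem_span_singleton.2 ⟨c⁻¹ * (r ⬝ᵥ x), funext fun i => ?_⟩
  have hxi : r ⬝ᵥ x = c * x i := congrFun hx i
  simp only [Pi.smul_apply, Pi.one_apply, smul_eq_mul, mul_one]
  rw [hxi, inv_mul_cancel_left₀ hc]

end Matrix

namespace IsGenerator

variable {d : ℕ} {Q : Matrix (Fin d) (Fin d) ℝ}

theorem mulVec_one_eq_zero (hQ : IsGenerator Q) : Q *ᵥ 1 = 0 :=
  funext fun i => by simpa [mulVec, dotProduct] using hQ.2 i

theorem isEqualInput_of_add_smul_one_eq_replicateRow (hQ : IsGenerator Q) (hd : 2 ≤ d)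
    {c : ℝ} {r : Fin d → ℝ} (hr : Q + c • 1 = replicateRow (Fin d) r) :
    (∀ i, 0 ≤ r i) ∧ ∑ i, r i = c ∧ Q = replicateRow (Fin d) r - c • 1 := by
  refine ⟨fun j => ?_, ?_, eq_sub_of_add_eq hr⟩
  · have : Nontrivial (Fin d) := Fin.nontrivial_iff_two_le.2 hd
    obtain ⟨i, hij⟩ := exists_ne j
    have hQr : Q i j = r j := by simpa [one_apply_ne hij] using congrFun (congrFun hr i) j
    exact hQr ▸ hQ.1 i j hij
  · have hrow := congrArg (· *ᵥ (1 : Fin d → ℝ)) hr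
    simp only [add_mulVec, hQ.mulVec_one_eq_zero, smul_mulVec, one_mulVec, zero_add,
      replicateRow_mulVec_eq_const] at hrow
    simpa [dotProduct] using (congrFun hrow ⟨0, by omega⟩).symm

end IsGenerator

theorem rank_eq_iff_equal_input (d : ℕ) (hd : 2 ≤ d)
    (Q : Matrix (Fin d) (Fin d) ℝ) (hQ : IsGenerator Q)
    (c : ℝ) (hc : 0 < c) (hQ2 : Q * Q = -(c • Q)) :
    Q.rank = d - 1 ↔
      ∃ cv : Fin d → ℝ, (∀ i, 0 ≤ cv i) ∧ (∑ i, cv i) = c ∧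
        Q = (Matrix.of fun _ j => cv j) - c • (1 : Matrix (Fin d) (Fin d) ℝ) := by
  have : Nonempty (Fin d) := ⟨⟨0, by omega⟩⟩
  have hQ1 : Q *ᵥ 1 = 0 := hQ.mulVec_one_eq_zero
  have hrank := rank_eq_card_sub_one_iff_ker_eq_span one_ne_zero hQ1
  rw [Fintype.card_fin] at hrank
  rw [hrank]
  constructor
  · intro hker
    have hQC : Q * (Q + c • 1) = 0 := by
      rw [mul_add, hQ2, mul_smul_comm, mul_one, neg_add_cancel]
    obtain ⟨r, hr⟩ := exists_eq_replicateRow_of_mul_eq_zero hker hQC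
    exact ⟨r, hQ.isEqualInput_of_add_smul_one_eq_replicateRow hd hr⟩
  · rintro ⟨cv, -, -, rfl⟩
    exact le_antisymm (ker_mulVecLin_replicateRow_sub_smul_one_le_span_one cv hc.ne')
      ((Submodule.span_singleton_le_iff_mem _ _).2 hQ1)
end

section
/- Let Q = C − c·1 be a d×d equal-input Markov generator with nonnegative parameters c₁, …, c_d and c = c₁ + ⋯ + c_d, and let X be any d×d Markov generator. Then X·Q = Q·X if and only if the row vector (c₁, …, c_d) multiplied by X equals the zero vector, i.e., (c₁,…,c_d)·X = 0. -/
theorem equal_input_commute_iff (d : ℕ)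
    (cv : Fin d → ℝ) (hcv : ∀ i, 0 ≤ cv i)
    (Q : Matrix (Fin d) (Fin d) ℝ)
    (hQ : Q = (Matrix.of fun _ j => cv j) -
      (∑ j, cv j) • (1 : Matrix (Fin d) (Fin d) ℝ))
    (X : Matrix (Fin d) (Fin d) ℝ) (hX : IsGenerator X) :
    X * Q = Q * X ↔ Matrix.vecMul cv X = 0 := by
  set C : Matrix (Fin d) (Fin d) ℝ := Matrix.of fun _ j => cv j with hC
  have hXC : X * C = 0 := by
    ext i j
    simp only [Matrix.mul_apply, hC, Matrix.of_apply, Matrix.zero_apply]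
    rw [← Finset.sum_mul, hX.2 i, zero_mul]
  have hcomm : X * Q = Q * X ↔ C * X = 0 := by
    rw [hQ]
    rw [Matrix.mul_sub, Matrix.sub_mul, hXC, Matrix.mul_smul, Matrix.smul_mul,
      Matrix.mul_one, Matrix.one_mul]
    constructor
    · intro h
      have := h.symm
      rw [sub_eq_sub_iff_sub_eq_sub] at this
      simpa using this
    · intro h
      rw [h]
  rw [hcomm]
  constructor
  · intro h
    ext j
    have := congrFun (congrFun h j) j
    simpa [Matrix.mul_apply, Matrix.vecMul, dotProduct, hC] using this
  · intro h
    ext i j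
    have := congrFun h j
    simpa [Matrix.mul_apply, Matrix.vecMul, dotProduct, hC] using this
end

section
/- Let d = 3 and let Q be the symmetric Markov generator with off-diagonal entries Q₁₂ = Q₂₁ = α, Q₁₃ = Q₃₁ = β, Q₂₃ = Q₃₂ = γ (and diagonal entries making row sums zero), where α, β, γ ≥ 0 are not all equal. Set Δ = α + β + γ and s = √(α² + β² + γ² − αβ − βγ − γα) > 0. Then exp(Q) = (1 − (sinh(s)/s)·Δ·e^{−Δ})·I₃ − cosh(s)·e^{−Δ}·J₃ + (sinh(s)/s)·e^{−Δ}·S, where I₃ is the 3×3 matrix with all entries 1/3, J₃ = I₃ − 1 (with 1 the identity), and S is the circulant-type matrix with rows (γ, α, β), (α, β, γ), (β, γ, α). -/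
/-!
Write `Q = -Δ • P + R` with `P = 1 - I₃` (the projection onto vectors of zero sum) and
`R = S - Δ • I₃`. Then `P R = R P = R` and `R² = s² • P`, so `(P ± R / s) / 2` are orthogonal
idempotents, the spectral projections of `Q` for the eigenvalues `-Δ ± s`, and
`exp Q = 1 - P + e^{-Δ} (cosh s • P + (sinh s / s) • R)`.
-/

open NormedSpace

section IdempotentExp

variable {𝔸 : Type*} [Ring 𝔸] [Algebra ℝ 𝔸]

theorem smul_add_smul_pow_succ_of_mul_eq_zero {P Q : 𝔸} (hP : IsIdempotentElem P)
    (hQ : IsIdempotentElem Q) (hPQ : P * Q = 0) (hQP : Q * P = 0) (a b : ℝ) (n : ℕ) :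
    (a • P + b • Q) ^ (n + 1) = a ^ (n + 1) • P + b ^ (n + 1) • Q := by
  induction n with
  | zero => simp
  | succ n ih =>
    rw [pow_succ, ih]
    simp only [add_mul, mul_add, smul_mul_smul_comm, hP.eq, hQ.eq, hPQ, hQP, smul_zero, add_zero,
      zero_add, ← pow_succ]

variable [TopologicalSpace 𝔸] [IsTopologicalRing 𝔸] [ContinuousSMul ℝ 𝔸] [T2Space 𝔸]

theorem exp_smul_add_smul_of_mul_eq_zero {P Q : 𝔸} (hP : IsIdempotentElem P)
    (hQ : IsIdempotentElem Q) (hPQ : P * Q = 0) (hQP : Q * P = 0) (a b : ℝ) :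
    exp (a • P + b • Q) = 1 + (Real.exp a - 1) • P + (Real.exp b - 1) • Q := by
  have hterm : ∀ n : ℕ, (n.factorial⁻¹ : ℝ) • (a • P + b • Q) ^ n =
      (a ^ n / n.factorial) • P + (b ^ n / n.factorial) • Q +
        if n = 0 then 1 - P - Q else 0 := by
    rintro (_ | n)
    · simp
    · simp [smul_add_smul_pow_succ_of_mul_eq_zero hP hQ hPQ hQP, smul_smul, div_eq_inv_mul]
  have hsum : HasSum (fun n : ℕ => (a ^ n / n.factorial) • P + (b ^ n / n.factorial) • Q +
        if n = 0 then 1 - P - Q else 0) (Real.exp a • P + Real.exp b • Q + (1 - P - Q)) := by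
    rw [Real.exp_eq_exp_ℝ]
    exact (((expSeries_div_hasSum_exp a).smul_const P).add
      ((expSeries_div_hasSum_exp b).smul_const Q)).add (hasSum_ite_eq 0 _)
  rw [congrFun (exp_eq_tsum ℝ), tsum_congr hterm, hsum.tsum_eq]
  module

theorem exp_smul_add_of_mul_self_eq_sq_smul {P R : 𝔸} {s : ℝ} (hs : s ≠ 0)
    (hP : IsIdempotentElem P) (hPR : P * R = R) (hRP : R * P = R) (hRR : R * R = s ^ 2 • P)
    (c : ℝ) :
    exp (c • P + R) = 1 - P + Real.exp c • (Real.cosh s • P + (Real.sinh s / s) • R) := by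
  have hmul : ∀ a b a' b' : ℝ, (a • P + b • R) * (a' • P + b' • R) =
      (a * a' + b * b' * s ^ 2) • P + (a * b' + b * a') • R := by
    intro a b a' b'
    simp only [add_mul, mul_add, smul_mul_smul_comm, hP.eq, hPR, hRP, hRR, smul_smul]
    module
  set P₁ : 𝔸 := (2⁻¹ : ℝ) • P + (2 * s)⁻¹ • R
  set P₂ : 𝔸 := (2⁻¹ : ℝ) • P + (-(2 * s)⁻¹) • R
  have hP₁ : IsIdempotentElem P₁ := by
    rw [IsIdempotentElem, hmul]; congr 2 <;> field_simp <;> ring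
  have hP₂ : IsIdempotentElem P₂ := by
    rw [IsIdempotentElem, hmul]; congr 2 <;> field_simp <;> ring
  have hP₁₂ : P₁ * P₂ = 0 := by
    rw [hmul]; field_simp; simp
  have hP₂₁ : P₂ * P₁ = 0 := by
    rw [hmul]; field_simp; simp
  have hdecomp : c • P + R = (c + s) • P₁ + (c - s) • P₂ := by
    simp only [P₁, P₂]; match_scalars <;> field_simp <;> ring
  rw [hdecomp, exp_smul_add_smul_of_mul_eq_zero hP₁ hP₂ hP₁₂ hP₂₁]
  simp only [P₁, P₂, Real.cosh_eq, Real.sinh_eq, Real.exp_add, Real.exp_sub, Real.exp_neg]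
  match_scalars <;> field_simp <;> ring

end IdempotentExp

section ThreeByThree

variable (α β γ : ℝ)

theorem sq_add_sq_add_sq_sub_mul_sub_mul_sub_mul_pos (hne : ¬(α = β ∧ β = γ)) :
    0 < α ^ 2 + β ^ 2 + γ ^ 2 - α * β - β * γ - γ * α := by
  rcases not_and_or.mp hne with h | h
  · have : 0 < (α - β) ^ 2 := sq_pos_of_ne_zero (sub_ne_zero.mpr h)
    nlinarith [sq_nonneg (β - γ), sq_nonneg (γ - α)]
  · have : 0 < (β - γ) ^ 2 := sq_pos_of_ne_zero (sub_ne_zero.mpr h)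
    nlinarith [sq_nonneg (α - β), sq_nonneg (γ - α)]

theorem isIdempotentElem_of_const_third :
    IsIdempotentElem (Matrix.of fun _ _ => (1 / 3 : ℝ) : Matrix (Fin 3) (Fin 3) ℝ) := by
  ext i j
  simp [Matrix.mul_apply]

theorem of_const_third_mul_anticirculant :
    (Matrix.of fun _ _ => (1 / 3 : ℝ)) * !![γ, α, β; α, β, γ; β, γ, α] =
      (α + β + γ) • Matrix.of fun _ _ => (1 / 3 : ℝ) := by
  ext i j
  fin_cases i <;> fin_cases j <;> simp [Matrix.mul_apply, Fin.sum_univ_three] <;> ring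

theorem anticirculant_mul_of_const_third :
    !![γ, α, β; α, β, γ; β, γ, α] * (Matrix.of fun _ _ => (1 / 3 : ℝ)) =
      (α + β + γ) • Matrix.of fun _ _ => (1 / 3 : ℝ) := by
  ext i j
  fin_cases i <;> fin_cases j <;> simp [Matrix.mul_apply, Fin.sum_univ_three] <;> ring

theorem anticirculant_mul_self :
    !![γ, α, β; α, β, γ; β, γ, α] * !![γ, α, β; α, β, γ; β, γ, α] =
      (α ^ 2 + β ^ 2 + γ ^ 2 - α * β - β * γ - γ * α) • (1 - Matrix.of fun _ _ => (1 / 3 : ℝ)) +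
        (α + β + γ) ^ 2 • Matrix.of fun _ _ => (1 / 3 : ℝ) := by
  ext i j
  fin_cases i <;> fin_cases j <;> simp [Matrix.mul_apply, Fin.sum_univ_three] <;> ring

theorem generator_eq_anticirculant_sub_smul_one :
    !![-α - β, α, β; α, -α - γ, γ; β, γ, -β - γ] =
      !![γ, α, β; α, β, γ; β, γ, α] - (α + β + γ) • (1 : Matrix (Fin 3) (Fin 3) ℝ) := by
  ext i j
  fin_cases i <;> fin_cases j <;> simp <;> ring

end ThreeByThree

theorem exp_symmetric_generator_three_dim_general (α β γ : ℝ)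
    (hne : ¬(α = β ∧ β = γ))
    (Q : Matrix (Fin 3) (Fin 3) ℝ)
    (hQ : Q = !![-α - β, α, β; α, -α - γ, γ; β, γ, -β - γ])
    (Δ s : ℝ) (hΔ : Δ = α + β + γ)
    (hs : s = Real.sqrt (α ^ 2 + β ^ 2 + γ ^ 2 - α * β - β * γ - γ * α))
    (I₃ J₃ S : Matrix (Fin 3) (Fin 3) ℝ)
    (hI : I₃ = Matrix.of fun _ _ => (1 / 3 : ℝ))
    (hJ : J₃ = I₃ - 1)
    (hS : S = !![γ, α, β; α, β, γ; β, γ, α]) :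
    0 < s ∧
    NormedSpace.exp Q =
      (1 - (Real.sinh s / s) * Δ * Real.exp (-Δ)) • I₃ -
        (Real.cosh s * Real.exp (-Δ)) • J₃ +
        ((Real.sinh s / s) * Real.exp (-Δ)) • S := by
  have hq := sq_add_sq_add_sq_sub_mul_sub_mul_sub_mul_pos α β γ hne
  have hs_pos : 0 < s := hs ▸ Real.sqrt_pos.mpr hq
  refine ⟨hs_pos, ?_⟩
  have hI_idem : IsIdempotentElem I₃ := hI ▸ isIdempotentElem_of_const_third
  have hIS : I₃ * S = Δ • I₃ := by rw [hI, hS, hΔ, of_const_third_mul_anticirculant]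
  have hSI : S * I₃ = Δ • I₃ := by rw [hI, hS, hΔ, anticirculant_mul_of_const_third]
  have hSS : S * S = s ^ 2 • (1 - I₃) + Δ ^ 2 • I₃ := by
    rw [hs, Real.sq_sqrt hq.le, hI, hS, hΔ, anticirculant_mul_self]
  have hQ' : Q = (-Δ) • (1 - I₃) + (S - Δ • I₃) := by
    rw [hQ, generator_eq_anticirculant_sub_smul_one, ← hS, ← hΔ]
    module
  have hPR : (1 - I₃) * (S - Δ • I₃) = S - Δ • I₃ := by
    simp only [sub_mul, mul_sub, one_mul, mul_smul_comm, hIS, hI_idem.eq]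
    module
  have hRP : (S - Δ • I₃) * (1 - I₃) = S - Δ • I₃ := by
    simp only [sub_mul, mul_sub, mul_one, smul_mul_assoc, hSI, hI_idem.eq]
    module
  have hRR : (S - Δ • I₃) * (S - Δ • I₃) = s ^ 2 • (1 - I₃) := by
    simp only [sub_mul, mul_sub, smul_mul_assoc, mul_smul_comm, hSS, hIS, hSI, hI_idem.eq,
      smul_smul]
    module
  rw [hQ', exp_smul_add_of_mul_self_eq_sq_smul hs_pos.ne' hI_idem.one_sub hPR hRP hRR, hJ]
  module

theorem exp_symmetric_generator_three_dim (α β γ : ℝ)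
    (hα : 0 ≤ α) (hβ : 0 ≤ β) (hγ : 0 ≤ γ)
    (hne : ¬(α = β ∧ β = γ))
    (Q : Matrix (Fin 3) (Fin 3) ℝ)
    (hQ : Q = !![-α - β, α, β; α, -α - γ, γ; β, γ, -β - γ])
    (Δ s : ℝ) (hΔ : Δ = α + β + γ)
    (hs : s = Real.sqrt (α ^ 2 + β ^ 2 + γ ^ 2 - α * β - β * γ - γ * α))
    (I₃ J₃ S : Matrix (Fin 3) (Fin 3) ℝ)
    (hI : I₃ = Matrix.of fun _ _ => (1 / 3 : ℝ))
    (hJ : J₃ = I₃ - 1)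
    (hS : S = !![γ, α, β; α, β, γ; β, γ, α]) :
    0 < s ∧
    NormedSpace.exp Q =
      (1 - (Real.sinh s / s) * Δ * Real.exp (-Δ)) • I₃ -
        (Real.cosh s * Real.exp (-Δ)) • J₃ +
        ((Real.sinh s / s) * Real.exp (-Δ)) • S :=
  exp_symmetric_generator_three_dim_general α β γ hne Q hQ Δ s hΔ hs I₃ J₃ S hI hJ hS
end
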